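/- arXiv:1807.02325 — 2 statements merged into one kernel-verified Lean document; each statement's English description precedes it below -/
import Mathlib

section
/- Assume d ≥ 5. There exists a constant C₁ > 0 such that for any r ≥ 1 and any Λ ⊆ Q(r) := [−r/2, r/2)^d ∩ Z^d, one has Σ_{x∈Λ} (‖x‖^{d−4} + 1)^{−1} · P_x(H_Λ^+ = ∞) ≤ C₁ r². -/
open Filter Finset MeasureTheory
open scoped symmDiff ENNReal

namespace SRW

/-- Vertices of `ℤ^d`. -/
abbrev V (d : ℕ) : Type := Fin d → ℤ

/-- The set of nearest-neighbor steps (the `2d` unit vectors `±e_i`) in `ℤ^d`. -/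
def steps (d : ℕ) : Finset (V d) :=
  (Finset.univ : Finset (Fin d × Bool)).image
    (fun p j => if j = p.1 then (if p.2 then 1 else -1) else 0)

/-- Position at time `k` of the walk started at `x` with step sequence `s`. -/
def pos {d : ℕ} (x : V d) (s : ℕ → V d) (k : ℕ) : V d :=
  x + ∑ i ∈ Finset.range k, s i

open Classical in
/-- Probability, for the simple random walk, of an event depending on the
first `n` steps (steps beyond `n` are set to `0`): each of the `(2d)^n`
admissible step sequences has equal probability. -/
noncomputable def probN (d n : ℕ) (P : (ℕ → V d) → Prop) : ℝ :=
  (((Fintype.piFinset fun _ : Fin n => steps d).filter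
      (fun s => P fun i => if h : i < n then s ⟨i, h⟩ else 0)).card : ℝ) / ((2 * d : ℕ) : ℝ) ^ n

/-- Expectation of a functional of the first `n` steps of the walk. -/
noncomputable def expN (d n : ℕ) (f : (ℕ → V d) → ℝ) : ℝ :=
  (∑ s ∈ Fintype.piFinset fun _ : Fin n => steps d,
      f fun i => if h : i < n then s ⟨i, h⟩ else 0) / ((2 * d : ℕ) : ℝ) ^ n

/-- Escape probability `P_x(H_A^+ = ∞)`: the walk started at `x` never
hits `A` at a positive time (decreasing limit of the finite-horizon events). -/
noncomputable def esc (d : ℕ) (A : Set (V d)) (x : V d) : ℝ :=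
  ⨅ n : ℕ, probN d n (fun s => ∀ k, 1 ≤ k → k ≤ n → pos x s k ∉ A)

/-- Newtonian capacity `Cap(A) = Σ_{x∈A} P_x(H_A^+ = ∞)`. -/
noncomputable def cap {d : ℕ} (A : Finset (V d)) : ℝ :=
  ∑ x ∈ A, esc d (↑A) x

/-- Green's function `G(z) = Σ_n P_0(S_n = z)`. -/
noncomputable def G (d : ℕ) (z : V d) : ℝ :=
  ∑' n : ℕ, probN d n (fun s => pos 0 s n = z)

/-- Truncated Green's function `G_T(z) = Σ_{n≤T} P_0(S_n = z)`. -/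
noncomputable def GT (d T : ℕ) (z : V d) : ℝ :=
  ∑ n ∈ Finset.range (T + 1), probN d n (fun s => pos 0 s n = z)

/-- Convolution `(G ⋆ G_T)(x) = Σ_y G(x-y) G_T(y)`. -/
noncomputable def GconvGT (d T : ℕ) (x : V d) : ℝ :=
  ∑' y : V d, G d (x - y) * GT d T y

/-- Euclidean norm on `ℤ^d`. -/
noncomputable def nrm {d : ℕ} (x : V d) : ℝ :=
  Real.sqrt (∑ i, ((x i : ℝ)) ^ 2)

/-- The range `{S_k : k ∈ I}` of the walk started at `x` over the set of times `I`. -/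
noncomputable def rangeOn {d : ℕ} (x : V d) (s : ℕ → V d) (I : Finset ℕ) : Finset (V d) :=
  I.image (pos x s)

/-- Probability that the walk started at `z` hits both `A` and `B` in finite time
(increasing limit of the finite-horizon probabilities). -/
noncomputable def hitBothProb (d : ℕ) (A B : Finset (V d)) (z : V d) : ℝ :=
  ⨆ n : ℕ, probN d n (fun s => (∃ k ≤ n, pos z s k ∈ A) ∧ (∃ k ≤ n, pos z s k ∈ B))

/-- The discrete cube `Q(x,r) = [x - r/2, x + r/2)^d ∩ ℤ^d`. -/
def cube {d : ℕ} (x : V d) (r : ℝ) : Set (V d) :=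
  {y | ∀ i, (x i : ℝ) - r / 2 ≤ (y i : ℝ) ∧ (y i : ℝ) < (x i : ℝ) + r / 2}

/-- The corrector `ξ_n(T)`. -/
noncomputable def xi (d n T : ℕ) (s : ℕ → V d) : ℝ :=
  ∑ k ∈ Finset.range (n + 1), ∑ x ∈ rangeOn 0 s (Finset.Icc 0 k),
    esc d (↑(rangeOn 0 s (Finset.Icc 0 k))) x * (GconvGT d T (x - pos 0 s k) / T)

/-- The capacity cross-term `χ_C(A,B) = Cap(A) + Cap(B) - Cap(A ∪ B)`. -/
noncomputable def chiC {d : ℕ} (A B : Finset (V d)) : ℝ := cap A + cap B - cap (A ∪ B)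

open Classical in
/-- Conditional expectation, given the first `m` steps (equal to those of `s`),
of a functional of the first `n` steps. -/
noncomputable def condExpN (d n m : ℕ) (f : (ℕ → V d) → ℝ) (s : ℕ → V d) : ℝ :=
  expN d n (fun s' => if ∀ i < m, s' i = s i then f s' else 0) * ((2 * d : ℕ) : ℝ) ^ m

/-- The compensator `ξ_n^*(T)`. -/
noncomputable def xiStar (d n T : ℕ) (s : ℕ → V d) : ℝ :=
  (1 / (T : ℝ)) * ∑ j ∈ Finset.range T, ∑ l ∈ Finset.Icc 1 (n / T - 1),
    condExpN d (n + T) (j + l * T)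
      (fun s' => chiC (rangeOn 0 s' (Finset.Icc j (j + l * T)))
        (rangeOn 0 s' (Finset.Icc (j + l * T) (j + (l + 1) * T)))) s

/-- `E[Cap(R_n)]`, the expected capacity of the range up to time `n`. -/
noncomputable def expCapRange (d n : ℕ) : ℝ :=
  expN d n (fun s => cap (rangeOn 0 s (Finset.Icc 0 n)))

/-- The maximal capacity `c_n` of the range of a nearest-neighbor path with `n` steps. -/
noncomputable def maxPathCap (d n : ℕ) : ℝ :=
  sSup {y : ℝ | ∃ (x : V d) (s : ℕ → V d), (∀ i, s i ∈ steps d) ∧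
    y = cap (rangeOn x s (Finset.Icc 0 n))}

/-- `Γ(A,Λ) = Σ_{x∈A} Σ_{y∈Λ} G(y-x) P_y(H_Λ^+ = ∞)`. -/
noncomputable def GamFin (d : ℕ) (A : Finset (V d)) (Λ : Set (V d)) : ℝ :=
  ∑ x ∈ A, ∑' y : Λ, G d ((y : V d) - x) * esc d Λ (y : V d)

/-- `P(Γ(R̃_∞, Λ) > t)`, as the increasing limit of the finite-horizon probabilities. -/
noncomputable def PGam (d : ℕ) (Λ : Set (V d)) (t : ℝ) : ℝ :=
  ⨆ N : ℕ, probN d N (fun s => t < GamFin d (rangeOn 0 s (Finset.Icc 0 N)) Λ)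

/-- `E_x[Γ(R̃_∞, Λ)]`, as the increasing limit of the finite-horizon expectations. -/
noncomputable def EGam (d : ℕ) (x : V d) (Λ : Set (V d)) : ℝ :=
  ⨆ N : ℕ, expN d N (fun s => GamFin d (rangeOn x s (Finset.Icc 0 N)) Λ)

/-- The law of the first `n` steps of two independent simple random walks:
uniform measure on pairs of admissible step sequences of length `n`. -/
noncomputable def pairLevel (d n : ℕ) : Measure ((Fin n → V d) × (Fin n → V d)) :=
  (((2 * d : ℕ) : ℝ≥0∞) ^ (2 * n))⁻¹ •
    ∑ a ∈ Fintype.piFinset fun _ : Fin n => steps d,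
      ∑ b ∈ Fintype.piFinset fun _ : Fin n => steps d, Measure.dirac (a, b)

open Classical in
/-- `Γ(R̃_∞, R_∞) = Σ_{x ∈ R̃_∞} Σ_{y ∈ R_∞} G(y-x) P_y(H_{R_∞}^+ = ∞)` for
two (step sequences of) walks, with values in `ℝ≥0∞`. -/
noncomputable def gammaInf (d : ℕ) (sA sB : ℕ → V d) : ℝ≥0∞ :=
  ∑' x : V d, ∑' y : V d,
    if x ∈ Set.range (pos (0 : V d) sA) ∧ y ∈ Set.range (pos (0 : V d) sB) then
      ENNReal.ofReal (G d (y - x) * esc d (Set.range (pos (0 : V d) sB)) y)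
    else 0

/-!
Split Λ into the dyadic shells 2^j ≤ |x|_∞ + 1 < 2^{j+1}. On shell j the weight
(‖x‖^{d-4} + 1)⁻¹ is at most 2^{d-4} 2^{-j(d-4)}, while the escape probabilities from Λ of the
points of Λ in the box of radius ρ = 2^{j+1} sum to at most 7^d ρ^{d-2}; so shell j contributes
O(4^j), and summing over j ≤ log₂ r gives O(r²).

The capacity-type bound comes from the last-exit decomposition: from any starting point y,
Σ_{k ≤ N} Σ_{x ∈ Λ} P_y(S_k = x) P_x(H_Λ^+ = ∞) ≤ 1. Sum this over y in the box of radius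
3ρ and N = 2ρ². By Chebyshev's inequality (E|S_k|² = k), for |x|_∞ ≤ ρ and k ≤ 2ρ² the
walks started in that box are at x at time k with total probability at least 1/2, so
ρ² Σ_{x ∈ Λ, |x|_∞ ≤ ρ} P_x(H_Λ^+ = ∞) ≤ (7ρ)^d.
-/

section Walk

variable {d : ℕ}

def signedUnit (p : Fin d × Bool) : V d := fun j => if j = p.1 then (if p.2 then 1 else -1) else 0

lemma signedUnit_injective : Function.Injective (signedUnit (d := d)) := by
  rintro ⟨i, b⟩ ⟨i', b'⟩ h
  have hi := congrFun h i
  by_cases hii : i = i' <;> cases b <;> cases b' <;> simp_all [signedUnit]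

lemma steps_eq_image : steps d = univ.image signedUnit := rfl

lemma card_steps : #(steps d) = 2 * d := by
  simp [steps_eq_image, card_image_of_injective _ signedUnit_injective, mul_comm]

lemma sum_steps_apply (i : Fin d) : ∑ v ∈ steps d, v i = 0 := by
  rw [steps_eq_image, sum_image fun _ _ _ _ h => signedUnit_injective h, Fintype.sum_prod_type]
  refine sum_eq_zero fun p _ => ?_
  by_cases h : i = p <;> simp [signedUnit, h]

lemma sum_steps_apply_mul_self (i : Fin d) : ∑ v ∈ steps d, v i * v i = 2 := by
  rw [steps_eq_image, sum_image fun _ _ _ _ h => signedUnit_injective h, Fintype.sum_prod_type]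
  simp [signedUnit, apply_ite (fun z : ℤ => z * z)]

def padSteps (n : ℕ) (s : Fin n → V d) : ℕ → V d :=
  fun i => if h : i < n then s ⟨i, h⟩ else 0

lemma pos_eq_add_pos_zero (y : V d) (s : ℕ → V d) (k : ℕ) : pos y s k = y + pos 0 s k := by
  simp [pos]

lemma pos_zero_padSteps_apply (k : ℕ) (s : Fin k → V d) (i : Fin d) :
    pos 0 (padSteps k s) k i = ∑ j : Fin k, s j i := by
  rw [pos, zero_add, Finset.sum_apply, ← Fin.sum_univ_eq_sum_range (fun j => padSteps k s j i) k]
  simp [padSteps]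

end Walk

section Expectation

variable {d n : ℕ}

lemma card_piFinset_steps : #(Fintype.piFinset fun _ : Fin n => steps d) = (2 * d) ^ n := by
  simp [card_steps]

lemma expN_eq (f : (ℕ → V d) → ℝ) :
    expN d n f = (∑ s ∈ Fintype.piFinset fun _ : Fin n => steps d, f (padSteps n s)) /
      ((2 * d : ℕ) : ℝ) ^ n := rfl

lemma expN_mono {f g : (ℕ → V d) → ℝ} (h : ∀ s, f s ≤ g s) :
    expN d n f ≤ expN d n g :=
  div_le_div_of_nonneg_right (sum_le_sum fun _ _ => h _) (by positivity)

lemma expN_add (f g : (ℕ → V d) → ℝ) :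
    expN d n (fun s => f s + g s) = expN d n f + expN d n g := by
  simp only [expN, sum_add_distrib, add_div]

lemma expN_sum {ι : Type*} (I : Finset ι) (f : ι → (ℕ → V d) → ℝ) :
    expN d n (fun s => ∑ a ∈ I, f a s) = ∑ a ∈ I, expN d n (f a) := by
  simp only [expN, sum_div]
  exact sum_comm

lemma expN_div_const (f : (ℕ → V d) → ℝ) (c : ℝ) :
    expN d n (fun s => f s / c) = expN d n f / c := by
  simp only [expN, ← sum_div, div_right_comm]

lemma expN_const (hd : 0 < d) (c : ℝ) : expN d n (fun _ => c) = c := by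
  rw [expN_eq, sum_const, card_piFinset_steps, nsmul_eq_mul]
  field_simp
  push_cast
  ring

open Classical in
lemma probN_eq_card (P : (ℕ → V d) → Prop) :
    probN d n P = #{s ∈ Fintype.piFinset fun _ : Fin n => steps d | P (padSteps n s)} /
      ((2 * d : ℕ) : ℝ) ^ n := rfl

open Classical in
lemma probN_eq_expN (P : (ℕ → V d) → Prop) :
    probN d n P = expN d n (fun s => if P s then 1 else 0) := by
  rw [probN, expN, sum_boole]

lemma probN_nonneg (P : (ℕ → V d) → Prop) : 0 ≤ probN d n P := by
  unfold probN; positivity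

lemma probN_mono {P Q : (ℕ → V d) → Prop} (h : ∀ s, P s → Q s) :
    probN d n P ≤ probN d n Q := by
  classical
  simp only [probN_eq_expN]
  refine expN_mono fun s => ?_
  split_ifs <;> simp_all

lemma probN_congr {P Q : (ℕ → V d) → Prop} (h : ∀ s, P s ↔ Q s) :
    probN d n P = probN d n Q :=
  congrArg _ (funext fun s => propext (h s))

lemma probN_add_probN_not (hd : 0 < d) (P : (ℕ → V d) → Prop) :
    probN d n P + probN d n (fun s => ¬ P s) = 1 := by
  classical
  simp only [probN_eq_expN, ← expN_add]
  refine Eq.trans ?_ (expN_const (n := n) hd 1)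
  congr 1 with s
  by_cases h : P s <;> simp [h]

lemma sum_probN_eq_probN_mem {α : Type*} (g : (ℕ → V d) → α) (S : Finset α) :
    ∑ z ∈ S, probN d n (fun s => g s = z) = probN d n (fun s => g s ∈ S) := by
  classical
  simp only [probN_eq_expN, ← expN_sum]
  congr 1 with s
  simp [eq_comm]

lemma sum_probN_le_one_of_disjoint {ι : Type*} (hd : 0 < d) (I : Finset ι)
    (P : ι → (ℕ → V d) → Prop)
    (hdisj : ∀ a ∈ I, ∀ b ∈ I, ∀ s, P a s → P b s → a = b) :
    ∑ a ∈ I, probN d n (P a) ≤ 1 := by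
  classical
  simp only [probN_eq_expN, ← expN_sum]
  refine (expN_mono fun s => ?_).trans_eq (expN_const (n := n) hd 1)
  rw [sum_boole, Nat.cast_le_one, card_le_one]
  intro a ha b hb
  rw [mem_filter] at ha hb
  exact hdisj a ha.1 b hb.1 s ha.2 hb.2

lemma esc_nonneg (A : Set (V d)) (x : V d) : 0 ≤ esc d A x :=
  Real.iInf_nonneg fun _ => probN_nonneg _

lemma esc_le_probN (A : Set (V d)) (x : V d) (n : ℕ) :
    esc d A x ≤ probN d n (fun s => ∀ k, 1 ≤ k → k ≤ n → pos x s k ∉ A) :=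
  ciInf_le ⟨0, fun _ ⟨_, hm⟩ => hm ▸ probN_nonneg _⟩ n

end Expectation

section SupNorm

variable {d : ℕ}

def supNorm (x : V d) : ℕ := univ.sup fun i => (x i).natAbs

lemma natAbs_le_supNorm (x : V d) (i : Fin d) : (x i).natAbs ≤ supNorm x :=
  le_sup (f := fun i => (x i).natAbs) (mem_univ i)

lemma supNorm_le_iff {x : V d} {R : ℕ} : supNorm x ≤ R ↔ ∀ i, (x i).natAbs ≤ R := by
  simp [supNorm]

lemma supNorm_sub_le (x y : V d) : supNorm (x - y) ≤ supNorm x + supNorm y :=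
  supNorm_le_iff.2 fun i =>
    (Int.natAbs_sub_le _ _).trans (add_le_add (natAbs_le_supNorm x i) (natAbs_le_supNorm y i))

lemma natAbs_le_nrm (x : V d) (i : Fin d) : ((x i).natAbs : ℝ) ≤ nrm x := by
  rw [Nat.cast_natAbs, Int.cast_abs]
  exact Real.abs_le_sqrt (single_le_sum (fun j _ => sq_nonneg ((x j : ℤ) : ℝ)) (mem_univ i))

lemma supNorm_le_nrm (x : V d) : (supNorm x : ℝ) ≤ nrm x := by
  have h : supNorm x ≤ ⌊nrm x⌋₊ :=
    supNorm_le_iff.2 fun i => Nat.le_floor (natAbs_le_nrm x i)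
  exact (Nat.cast_le.2 h).trans (Nat.floor_le (Real.sqrt_nonneg _))

noncomputable def box (R : ℕ) : Finset (V d) := Fintype.piFinset fun _ => Icc (-(R : ℤ)) R

lemma mem_box {x : V d} {R : ℕ} : x ∈ box R ↔ supNorm x ≤ R := by
  simp only [box, Fintype.mem_piFinset, mem_Icc, supNorm_le_iff, ← abs_le, Int.abs_eq_natAbs]
  exact forall_congr' fun _ => Nat.cast_le

lemma card_box (R : ℕ) : #(box (d := d) R) = (2 * R + 1) ^ d := by
  simp only [box, Fintype.card_piFinset, Int.card_Icc, prod_const, card_univ, Fintype.card_fin]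
  congr 1
  omega

end SupNorm

section SecondMoment

variable {d : ℕ}

lemma sum_piFinset_steps_apply_mul_apply {k : ℕ} (i : Fin d) (j j' : Fin k) :
    ∑ s ∈ Fintype.piFinset (fun _ : Fin k => steps d), s j i * s j' i =
      if j = j' then 2 * (2 * (d : ℤ)) ^ (k - 1) else 0 := by
  split_ifs with h
  · subst h
    rw [Fintype.sum_piFinset_apply (fun v : V d => v i * v i), sum_steps_apply_mul_self,
      card_steps, Fintype.card_fin, nsmul_eq_mul]
    push_cast
    ring
  · have hprod : ∀ s : Fin k → V d, s j i * s j' i =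
        ∏ u, (if u = j then s u i else 1) * (if u = j' then s u i else 1) := by
      intro s
      rw [prod_mul_distrib, prod_ite_eq', prod_ite_eq']
      simp
    rw [sum_congr rfl fun s _ => hprod s,
      sum_prod_piFinset _ fun u (v : V d) =>
        (if u = j then v i else 1) * (if u = j' then v i else 1)]
    exact prod_eq_zero (mem_univ j) (by simp [h, sum_steps_apply])

lemma sum_piFinset_steps_sum_sq (k : ℕ) :
    ∑ s ∈ Fintype.piFinset (fun _ : Fin k => steps d), ∑ i, (∑ j : Fin k, s j i) ^ 2 =
      k * (2 * d) ^ k := by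
  simp_rw [sq, sum_mul_sum]
  rw [sum_comm]
  have hswap : ∀ i : Fin d, ∑ s ∈ Fintype.piFinset (fun _ : Fin k => steps d),
      ∑ j, ∑ j', s j i * s j' i =
        ∑ j, ∑ j', ∑ s ∈ Fintype.piFinset (fun _ : Fin k => steps d), s j i * s j' i := by
    intro i
    rw [sum_comm]
    exact sum_congr rfl fun _ _ => sum_comm
  simp only [hswap, sum_piFinset_steps_apply_mul_apply, sum_ite_eq, mem_univ, ↓reduceIte,
    sum_const, card_univ, Fintype.card_fin, Int.nsmul_eq_mul]
  rcases k with _ | k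
  · simp
  · push_cast
    ring

lemma expN_sum_sq_pos (hd : 0 < d) (k : ℕ) :
    expN d k (fun s => ∑ i, ((pos 0 s k i : ℤ) : ℝ) ^ 2) = k := by
  have h := congrArg (Int.cast : ℤ → ℝ) (sum_piFinset_steps_sum_sq (d := d) k)
  push_cast at h
  simp only [expN_eq, pos_zero_padSteps_apply]
  push_cast
  rw [h]
  field_simp

lemma probN_lt_supNorm_le (hd : 0 < d) (k : ℕ) {T : ℕ} (hT : 0 < T) :
    probN d k (fun s => T < supNorm (pos 0 s k)) ≤ k / T ^ 2 := by
  classical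
  rw [probN_eq_expN, ← expN_sum_sq_pos hd k, ← expN_div_const]
  refine expN_mono fun s => ?_
  split_ifs with h
  · obtain ⟨i, -, hi⟩ := Finset.lt_sup_iff.1 h
    have hi' : (T : ℝ) ≤ |((pos 0 s k i : ℤ) : ℝ)| := by
      rw [← Int.cast_abs, Int.abs_eq_natAbs]
      exact_mod_cast hi.le
    rw [le_div_iff₀ (by positivity), one_mul]
    calc (T : ℝ) ^ 2 ≤ ((pos 0 s k i : ℤ) : ℝ) ^ 2 := by
          simpa only [sq_abs] using pow_le_pow_left₀ (by positivity) hi' 2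
      _ ≤ _ := single_le_sum (fun j _ => sq_nonneg ((pos 0 s k j : ℤ) : ℝ)) (mem_univ i)
  · positivity

end SecondMoment

section Markov

variable {d k m : ℕ}

lemma padSteps_append_of_lt (a : Fin k → V d) (b : Fin m → V d) {i : ℕ} (h : i < k) :
    padSteps (k + m) (Fin.append a b) i = padSteps k a i := by
  simp only [padSteps, dif_pos h, dif_pos (h.trans_le (Nat.le_add_right k m))]
  exact Fin.append_left a b ⟨i, h⟩

lemma padSteps_append_add (a : Fin k → V d) (b : Fin m → V d) {u : ℕ} (h : u < m) :
    padSteps (k + m) (Fin.append a b) (k + u) = padSteps m b u := by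
  simp only [padSteps, dif_pos h, dif_pos (Nat.add_lt_add_left h k)]
  exact Fin.append_right a b ⟨u, h⟩

lemma pos_padSteps_append_of_le (y : V d) (a : Fin k → V d) (b : Fin m → V d) {t : ℕ}
    (ht : t ≤ k) : pos y (padSteps (k + m) (Fin.append a b)) t = pos y (padSteps k a) t := by
  unfold pos
  congr 1
  exact sum_congr rfl fun i hi => padSteps_append_of_lt a b ((mem_range.1 hi).trans_le ht)

lemma pos_padSteps_append_add (y : V d) (a : Fin k → V d) (b : Fin m → V d) {t : ℕ}
    (ht : t ≤ m) : pos y (padSteps (k + m) (Fin.append a b)) (k + t) =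
      pos (pos y (padSteps k a) k) (padSteps m b) t := by
  rw [← pos_padSteps_append_of_le y a b (m := m) le_rfl]
  unfold pos
  rw [sum_range_add, ← add_assoc]
  congr 1
  exact sum_congr rfl fun u hu => padSteps_append_add a b ((mem_range.1 hu).trans_le ht)

lemma probN_pos_eq_mul_probN_le (y x : V d) (A : Set (V d)) :
    probN d k (fun s => pos y s k = x) *
        probN d m (fun s => ∀ j, 1 ≤ j → j ≤ m → pos x s j ∉ A) ≤
      probN d (k + m)
        (fun s => pos y s k = x ∧ ∀ j, k < j → j ≤ k + m → pos y s j ∉ A) := by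
  classical
  rw [probN_eq_card, probN_eq_card, probN_eq_card, div_mul_div_comm, ← pow_add, ← Nat.cast_mul,
    ← card_product]
  refine div_le_div_of_nonneg_right (Nat.cast_le.2 (card_le_card_of_injOn
    (fun p => Fin.append p.1 p.2) ?_ (Fin.appendEquiv k m).injective.injOn)) (by positivity)
  rintro ⟨a, b⟩ hab
  simp only [coe_product, Set.mem_prod, mem_coe, mem_filter, Fintype.mem_piFinset] at hab
  obtain ⟨⟨ha, hax⟩, hb, hbA⟩ := hab
  simp only [mem_coe, mem_filter]
  refine ⟨Fintype.mem_piFinset.2 fun u => ?_, ?_, fun j hkj hjm => ?_⟩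
  · refine Fin.addCases (fun i => ?_) (fun i => ?_) u <;> simp [ha, hb]
  · simpa [pos_padSteps_append_of_le y a b le_rfl] using hax
  · obtain ⟨t, rfl⟩ := Nat.exists_eq_add_of_lt hkj
    rw [add_assoc, pos_padSteps_append_add y a b (by omega), hax]
    exact hbA (t + 1) (by omega) (by omega)

end Markov

section Capacity

variable {d : ℕ}

lemma sum_probN_pos_eq_mul_esc_le_one (hd : 0 < d) (Λ : Finset (V d)) (y : V d) (N : ℕ) :
    ∑ k ∈ range (N + 1), ∑ x ∈ Λ, probN d k (fun s => pos y s k = x) * esc d Λ x ≤ 1 := by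
  have hlast : ∀ k ∈ range (N + 1), ∀ x ∈ Λ,
      probN d k (fun s => pos y s k = x) * esc d Λ x ≤
        probN d N
          (fun s => pos y s k = x ∧ ∀ j, k < j → j ≤ N → pos y s j ∉ (Λ : Set (V d))) := by
    intro k hk x _
    obtain ⟨m, rfl⟩ := Nat.exists_eq_add_of_le (Nat.lt_succ_iff.1 (mem_range.1 hk))
    exact (mul_le_mul_of_nonneg_left (esc_le_probN _ x m) (probN_nonneg _)).trans
      (probN_pos_eq_mul_probN_le y x _)
  refine (sum_le_sum fun k hk => sum_le_sum fun x hx => hlast k hk x hx).trans ?_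
  -- `(k, x)` is the time and place of the last visit to `Λ` up to time `N`: disjoint events.
  rw [← sum_product']
  refine sum_probN_le_one_of_disjoint hd _ _ ?_
  rintro ⟨k, x⟩ hkx ⟨k', x'⟩ hkx' s ⟨hx, hk⟩ ⟨hx', hk'⟩
  simp only [mem_product, mem_range] at hkx hkx'
  rcases lt_trichotomy k k' with hlt | rfl | hlt
  · exact absurd (hx' ▸ mem_coe.2 hkx'.2) (hk k' hlt (by omega))
  · exact congrArg _ (hx.symm.trans hx')
  · exact absurd (hx ▸ mem_coe.2 hkx.2) (hk' k hlt (by omega))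

lemma one_half_le_sum_probN_pos_eq (hd : 0 < d) {ρ k : ℕ} (hρ : 0 < ρ) (hk : k ≤ 2 * ρ ^ 2)
    {x : V d} (hx : supNorm x ≤ ρ) :
    1 / 2 ≤ ∑ y ∈ box (3 * ρ), probN d k (fun s => pos y s k = x) := by
  have htranslate : ∀ y, probN d k (fun s => pos y s k = x) =
      probN d k (fun s => x - pos 0 s k = y) := fun y =>
    probN_congr fun s => by rw [pos_eq_add_pos_zero, sub_eq_iff_eq_add, eq_comm]
  have hfar : probN d k (fun s => 2 * ρ < supNorm (pos 0 s k)) ≤ 1 / 2 := by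
    refine (probN_lt_supNorm_le hd k (by omega)).trans ?_
    have hk' : (k : ℝ) ≤ 2 * ρ ^ 2 := by exact_mod_cast hk
    rw [div_le_div_iff₀ (by positivity) (by norm_num)]
    push_cast
    nlinarith
  have hnear : probN d k (fun s => ¬ 2 * ρ < supNorm (pos 0 s k)) ≤
      probN d k (fun s => x - pos 0 s k ∈ box (3 * ρ)) :=
    probN_mono fun s hs => mem_box.2 ((supNorm_sub_le _ _).trans (by omega))
  rw [sum_congr rfl fun y _ => htranslate y, sum_probN_eq_probN_mem]
  linarith [probN_add_probN_not hd (n := k) (fun s => 2 * ρ < supNorm (pos 0 s k))]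

lemma sq_mul_sum_esc_le (hd : 0 < d) (Λ : Finset (V d)) {ρ : ℕ} (hρ : 0 < ρ) :
    (ρ : ℝ) ^ 2 * ∑ x ∈ Λ with supNorm x ≤ ρ, esc d Λ x ≤ (7 * ρ) ^ d := by
  set N := 2 * ρ ^ 2
  set S := ∑ x ∈ Λ with supNorm x ≤ ρ, esc d Λ x
  have hS : 0 ≤ S := sum_nonneg fun _ _ => esc_nonneg _ _
  have hB : (#(box (d := d) (3 * ρ)) : ℝ) ≤ (7 * ρ) ^ d := by
    rw [card_box]
    push_cast
    gcongr
    have : (1 : ℝ) ≤ ρ := by exact_mod_cast hρ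
    linarith
  calc (ρ : ℝ) ^ 2 * S
      ≤ ∑ _k ∈ range (N + 1), ∑ x ∈ Λ with supNorm x ≤ ρ, 1 / 2 * esc d Λ x := by
        rw [sum_const, card_range, nsmul_eq_mul, ← mul_sum]
        push_cast [N]
        nlinarith
    _ ≤ ∑ k ∈ range (N + 1), ∑ x ∈ Λ,
          (∑ y ∈ box (3 * ρ), probN d k (fun s => pos y s k = x)) * esc d Λ x := by
        refine sum_le_sum fun k hk => (sum_le_sum fun x hx => ?_).trans
          (sum_le_sum_of_subset_of_nonneg (filter_subset _ _) fun x _ _ => ?_)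
        · exact mul_le_mul_of_nonneg_right (one_half_le_sum_probN_pos_eq hd hρ
            (Nat.lt_succ_iff.1 (mem_range.1 hk)) (mem_filter.1 hx).2) (esc_nonneg _ _)
        · exact mul_nonneg (sum_nonneg fun _ _ => probN_nonneg _) (esc_nonneg _ _)
    _ = ∑ y ∈ box (3 * ρ), ∑ k ∈ range (N + 1), ∑ x ∈ Λ,
          probN d k (fun s => pos y s k = x) * esc d Λ x := by
        simp only [sum_mul]
        exact (sum_congr rfl fun _ _ => sum_comm).trans sum_comm
    _ ≤ ∑ _y ∈ box (3 * ρ), 1 :=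
        sum_le_sum fun y _ => sum_probN_pos_eq_mul_esc_le_one hd Λ y N
    _ ≤ (7 * ρ) ^ d := by simpa using hB

end Capacity

section Shells

variable {d : ℕ}

lemma one_div_nrm_pow_add_one_le {x : V d} {j : ℕ} (hj : 2 ^ j ≤ supNorm x + 1) (m : ℕ) :
    1 / (nrm x ^ m + 1) ≤ 2 ^ m / (2 ^ j) ^ m := by
  have hnrm : 0 ≤ nrm x := Real.sqrt_nonneg _
  have h2j : (2 : ℝ) ^ j ≤ nrm x + 1 := by
    have h : ((2 ^ j : ℕ) : ℝ) ≤ supNorm x + 1 := by exact_mod_cast hj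
    push_cast at h
    linarith [supNorm_le_nrm x]
  rw [div_le_div_iff₀ (by positivity) (by positivity), one_mul]
  calc ((2 : ℝ) ^ j) ^ m ≤ (nrm x + 1) ^ m := pow_le_pow_left₀ (by positivity) h2j m
    _ ≤ 2 ^ (m - 1) * (nrm x ^ m + 1 ^ m) := add_pow_le hnrm zero_le_one m
    _ ≤ 2 ^ m * (nrm x ^ m + 1) := by
        rw [one_pow]
        gcongr
        · norm_num
        · omega

lemma sum_shell_le (hd : 4 ≤ d) (Λ : Finset (V d)) (j : ℕ) :
    ∑ x ∈ Λ with Nat.log 2 (supNorm x + 1) = j, 1 / (nrm x ^ (d - 4) + 1) * esc d Λ x ≤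
      7 ^ d * 4 ^ d * 4 ^ j := by
  set ρ := 2 ^ (j + 1)
  have hsub : {x ∈ Λ | Nat.log 2 (supNorm x + 1) = j} ⊆ {x ∈ Λ | supNorm x ≤ ρ} := by
    intro x
    simp only [mem_filter]
    rintro ⟨hx, rfl⟩
    exact ⟨hx, (Nat.lt_of_succ_lt (Nat.lt_pow_succ_log_self one_lt_two _)).le⟩
  have hcap : ∑ x ∈ Λ with supNorm x ≤ ρ, esc d Λ x ≤ (7 * ρ) ^ d / ρ ^ 2 := by
    rw [le_div_iff₀ (by positivity), mul_comm]
    exact sq_mul_sum_esc_le (by omega) Λ (by positivity)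
  have hweight : ∀ x : V d, Nat.log 2 (supNorm x + 1) = j →
      1 / (nrm x ^ (d - 4) + 1) ≤ 2 ^ (d - 4) / ((2 : ℝ) ^ j) ^ (d - 4) := fun x hx =>
    one_div_nrm_pow_add_one_le (hx ▸ Nat.pow_log_le_self 2 (by omega)) _
  calc ∑ x ∈ Λ with Nat.log 2 (supNorm x + 1) = j, 1 / (nrm x ^ (d - 4) + 1) * esc d Λ x
      ≤ 2 ^ (d - 4) / ((2 : ℝ) ^ j) ^ (d - 4) * ∑ x ∈ Λ with supNorm x ≤ ρ, esc d Λ x := by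
        rw [mul_sum]
        refine (sum_le_sum fun x hx => mul_le_mul_of_nonneg_right (hweight x (mem_filter.1 hx).2)
          (esc_nonneg _ _)).trans (sum_le_sum_of_subset_of_nonneg hsub fun x _ _ => ?_)
        exact mul_nonneg (by positivity) (esc_nonneg _ _)
    _ ≤ 2 ^ (d - 4) / ((2 : ℝ) ^ j) ^ (d - 4) * ((7 * ρ) ^ d / ρ ^ 2) := by gcongr
    _ ≤ 7 ^ d * 4 ^ d * 4 ^ j := by
        obtain ⟨m, rfl⟩ := Nat.exists_eq_add_of_le' hd
        have h4 : (4 : ℝ) = 2 ^ 2 := by norm_num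
        simp only [ρ, Nat.add_sub_cancel, h4, ← pow_mul, mul_pow]
        push_cast
        calc _ = 7 ^ (m + 4) * 2 ^ (2 * m + 2) * ((2 : ℝ) ^ j) ^ 2 := by
              field_simp
              ring
          _ ≤ 7 ^ (m + 4) * 2 ^ (2 * (m + 4)) * 2 ^ (2 * j) := by
              rw [← pow_mul, mul_comm j]
              gcongr
              · norm_num
              · omega

lemma supNorm_add_one_le_ceil {r : ℝ} {x : V d} (hr : 1 ≤ r)
    (hx : ∀ i, -(r / 2) ≤ (x i : ℝ) ∧ (x i : ℝ) < r / 2) :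
    supNorm x + 1 ≤ ⌈r⌉₊ := by
  have hsup : supNorm x ≤ ⌊r / 2⌋₊ := supNorm_le_iff.2 fun i => Nat.le_floor <| by
    rw [Nat.cast_natAbs, Int.cast_abs]
    exact abs_le.2 ⟨(hx i).1, (hx i).2.le⟩
  have h2 : 2 * supNorm x ≤ ⌈r⌉₊ := by
    have h : ((2 * supNorm x : ℕ) : ℝ) ≤ ⌈r⌉₊ := by
      push_cast
      linarith [Nat.floor_le (by linarith : 0 ≤ r / 2), Nat.le_ceil r,
        (Nat.cast_le (α := ℝ)).2 hsup]
    exact_mod_cast h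
  have h1 : 1 ≤ ⌈r⌉₊ := Nat.one_le_ceil_iff.2 (by linarith)
  omega

lemma sum_range_log_ceil_four_pow_le {r : ℝ} (hr : 1 ≤ r) :
    ∑ j ∈ range (Nat.log 2 ⌈r⌉₊ + 1), (4 : ℝ) ^ j ≤ 16 * r ^ 2 := by
  set L := Nat.log 2 ⌈r⌉₊
  have hL : ((2 ^ L : ℕ) : ℝ) ≤ r + 1 :=
    (Nat.cast_le.2 (Nat.pow_log_le_self 2 (by positivity))).trans
      (Nat.ceil_lt_add_one (by linarith)).le
  calc ∑ j ∈ range (L + 1), (4 : ℝ) ^ j = ((∑ j ∈ range (L + 1), 4 ^ j : ℕ) : ℝ) := by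
        push_cast; rfl
    _ ≤ ((4 ^ (L + 1) : ℕ) : ℝ) :=
        Nat.cast_le.2 (Nat.geomSum_lt (by norm_num) fun k hk => mem_range.1 hk).le
    _ = 4 * ((2 ^ L : ℕ) : ℝ) ^ 2 := by
        push_cast
        rw [pow_succ, ← pow_mul, mul_comm L 2, pow_mul]
        norm_num
        ring
    _ ≤ 4 * (r + 1) ^ 2 := by gcongr
    _ ≤ 16 * r ^ 2 := by nlinarith

end Shells

/-- For `d ≥ 5` there is `C₁ > 0` such that for every `r ≥ 1` and every
`Λ ⊆ Q(r) = [-r/2, r/2)^d ∩ ℤ^d`,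
`Σ_{x∈Λ} (‖x‖^{d-4} + 1)⁻¹ P_x(H_Λ^+ = ∞) ≤ C₁ r²`. -/
theorem sum_green_esc_le {d : ℕ} (hd : 5 ≤ d) :
    ∃ C₁ : ℝ, 0 < C₁ ∧ ∀ r : ℝ, 1 ≤ r → ∀ Λ : Finset (V d),
      (∀ x ∈ Λ, ∀ i, -(r / 2) ≤ (x i : ℝ) ∧ (x i : ℝ) < r / 2) →
      ∑ x ∈ Λ, (1 / (nrm x ^ (d - 4) + 1)) * esc d (↑Λ) x ≤ C₁ * r ^ 2 := by
  refine ⟨16 * 7 ^ d * 4 ^ d, by positivity, fun r hr Λ hΛ => ?_⟩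
  have hshell : ∀ x ∈ Λ, Nat.log 2 (supNorm x + 1) ∈ range (Nat.log 2 ⌈r⌉₊ + 1) := fun x hx =>
    mem_range.2 (Nat.lt_succ_of_le (Nat.log_mono_right (supNorm_add_one_le_ceil hr (hΛ x hx))))
  calc ∑ x ∈ Λ, 1 / (nrm x ^ (d - 4) + 1) * esc d Λ x
      = ∑ j ∈ range (Nat.log 2 ⌈r⌉₊ + 1), ∑ x ∈ Λ with Nat.log 2 (supNorm x + 1) = j,
          1 / (nrm x ^ (d - 4) + 1) * esc d Λ x := (sum_fiberwise_of_maps_to hshell _).symm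
    _ ≤ ∑ j ∈ range (Nat.log 2 ⌈r⌉₊ + 1), 7 ^ d * 4 ^ d * (4 : ℝ) ^ j :=
        sum_le_sum fun j _ => sum_shell_le (by omega) Λ j
    _ ≤ 7 ^ d * 4 ^ d * (16 * r ^ 2) := by
        rw [← mul_sum]
        gcongr
        exact sum_range_log_ceil_four_pow_le hr
    _ = 16 * 7 ^ d * 4 ^ d * r ^ 2 := by ring

end SRW
end

section
/- Assume d ≥ 3. Under the same density hypothesis (ℓ_K(Q(x,r)) ≤ ρ r^d for all x ∈ rZ^d, with ρ ∈ (0,1), r ≥ 1), there is a constant C₃ > 0 such that for any z ∈ Z^d, Σ_{k∈K} 1{‖S(k)−z‖ ≥ 2r} · ‖S(k)−z‖^{−(d−2)} ≤ C₃ ρ^{1−2/d} |K|^{2/d}. -/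
/-!
Let `n = |K|` and `T = (n / ρ)^{1/d}`, the side of a cube holding `n` points at density `ρ`.
Points with `‖S k - z‖ > T` contribute at most `n T^{2-d} = ρ T^2`. Covering balls by cubes of
side `r` gives `#{k : ‖S k - z‖ ≤ t} ≤ 4^d ρ t^d` for `t ≥ r`, so, summing over the dyadic scales
`t = T / 2^j`, the points with `2r ≤ ‖S k - z‖ ≤ T` contribute `O(ρ T^2)` as well.
Finally `ρ T^2 = ρ^{1-2/d} n^{2/d}`.
-/

open Filter Finset MeasureTheory
open scoped symmDiff ENNReal

namespace SRW

section LatticeCount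

variable {d : ℕ}

lemma abs_coord_le_nrm (y : V d) (i : Fin d) : |(y i : ℝ)| ≤ nrm y :=
  calc |(y i : ℝ)| = Real.sqrt ((y i : ℝ) ^ 2) := (Real.sqrt_sq_eq_abs _).symm
    _ ≤ nrm y := Real.sqrt_le_sqrt (single_le_sum (fun j _ => sq_nonneg (y j : ℝ)) (mem_univ i))

noncomputable def cubeIndex (r : ℕ) (y : V d) : V d := fun i => ⌊(y i : ℝ) / r + 1 / 2⌋

lemma mem_cube_cubeIndex {r : ℕ} (hr : 0 < r) (y : V d) : y ∈ cube (r • cubeIndex r y) r := by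
  intro i
  have hr' : (0 : ℝ) < r := by exact_mod_cast hr
  have hlo := mul_le_mul_of_nonneg_left (Int.floor_le ((y i : ℝ) / r + 1 / 2)) hr'.le
  have hhi := mul_lt_mul_of_pos_left (Int.lt_floor_add_one ((y i : ℝ) / r + 1 / 2)) hr'
  have hy : (r : ℝ) * ((y i : ℝ) / r + 1 / 2) = y i + r / 2 := by field_simp
  simp only [cubeIndex, Pi.smul_apply, nsmul_eq_mul, Int.cast_mul, Int.cast_natCast]
  constructor <;> nlinarith

lemma cubeIndex_mem_piFinset (r : ℕ) {y z : V d} {t : ℝ} (hyz : nrm (y - z) ≤ t) :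
    cubeIndex r y ∈ Fintype.piFinset fun i =>
      Icc ⌊((z i : ℝ) - t) / r + 1 / 2⌋ ⌊((z i : ℝ) + t) / r + 1 / 2⌋ := by
  rw [Fintype.mem_piFinset]
  intro i
  have hi := abs_le.mp ((abs_coord_le_nrm (y - z) i).trans hyz)
  simp only [Pi.sub_apply, Int.cast_sub] at hi
  exact mem_Icc.mpr ⟨Int.floor_mono (by gcongr; linarith), Int.floor_mono (by gcongr; linarith)⟩

lemma card_Icc_floor_le {a b : ℝ} (hab : a ≤ b) : ((Icc ⌊a⌋ ⌊b⌋).card : ℝ) ≤ b - a + 2 := by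
  have := Int.floor_mono hab
  rw [Int.card_Icc, ← Int.cast_natCast, Int.toNat_of_nonneg (by omega)]
  push_cast
  linarith [Int.floor_le b, Int.lt_floor_add_one a]

open Classical in
/-- Points at distance `≤ t` from `z` lie in at most `(4 t / r) ^ d` cubes of side `r`,
each carrying at most `ρ r ^ d` of them. -/
lemma card_filter_nrm_le {ρ : ℝ} (hρ : 0 ≤ ρ) {r : ℕ} (hr : 0 < r) (S : ℕ → V d) (K : Finset ℕ)
    (hdens : ∀ m : V d, ((K.filter fun k => S k ∈ cube (r • m) (r : ℝ)).card : ℝ)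
        ≤ ρ * (r : ℝ) ^ d)
    (z : V d) {t : ℝ} (hrt : (r : ℝ) ≤ t) :
    ((K.filter fun k => nrm (S k - z) ≤ t).card : ℝ) ≤ 4 ^ d * ρ * t ^ d := by
  have hr' : (0 : ℝ) < r := by exact_mod_cast hr
  set box : Finset (V d) := Fintype.piFinset fun i =>
    Icc ⌊((z i : ℝ) - t) / r + 1 / 2⌋ ⌊((z i : ℝ) + t) / r + 1 / 2⌋
  have hcover : (K.filter fun k => nrm (S k - z) ≤ t) ⊆
      box.biUnion fun m => K.filter fun k => S k ∈ cube (r • m) r := by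
    intro k hk
    obtain ⟨hkK, hkt⟩ := mem_filter.mp hk
    exact mem_biUnion.mpr ⟨cubeIndex r (S k), cubeIndex_mem_piFinset r hkt,
      mem_filter.mpr ⟨hkK, mem_cube_cubeIndex hr (S k)⟩⟩
  have hbox : (box.card : ℝ) ≤ (4 * t / r) ^ d := by
    rw [Fintype.card_piFinset, Nat.cast_prod]
    refine (prod_le_prod (fun _ _ => by positivity) fun i _ => ?_).trans_eq
      (Fin.prod_const d (4 * t / r))
    refine (card_Icc_floor_le (by gcongr; linarith)).trans ?_
    rw [le_div_iff₀ hr']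
    field_simp
    linarith
  calc ((K.filter fun k => nrm (S k - z) ≤ t).card : ℝ)
      ≤ ∑ m ∈ box, ((K.filter fun k => S k ∈ cube (r • m) r).card : ℝ) := by
        exact_mod_cast (card_le_card hcover).trans card_biUnion_le
    _ ≤ ∑ _m ∈ box, ρ * (r : ℝ) ^ d := sum_le_sum fun m _ => hdens m
    _ = box.card * (ρ * (r : ℝ) ^ d) := by rw [sum_const, nsmul_eq_mul]
    _ ≤ (4 * t / r) ^ d * (ρ * (r : ℝ) ^ d) := by gcongr
    _ = 4 ^ d * ρ * t ^ d := by
        rw [div_pow, mul_pow]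
        field_simp

end LatticeCount

section DyadicSum

variable {ι : Type*}

lemma sum_one_div_pow_le_card_div (s : Finset ι) (f : ι → ℝ) (m : ℕ) {T : ℝ} (hT : 0 < T)
    (hf : ∀ k ∈ s, T ≤ f k) :
    ∑ k ∈ s, 1 / f k ^ m ≤ s.card / T ^ m := by
  calc ∑ k ∈ s, 1 / f k ^ m ≤ ∑ _k ∈ s, 1 / T ^ m :=
        sum_le_sum fun k hk => one_div_le_one_div_of_le (by positivity) (by gcongr; exact hf k hk)
    _ = s.card / T ^ m := by rw [sum_const, nsmul_eq_mul, mul_one_div]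

lemma exists_dyadic_scale {x T : ℝ} (hx : 0 < x) (hxT : x ≤ T) :
    ∃ j : ℕ, x ≤ T / 2 ^ j ∧ T / 2 ^ j ≤ 2 * x := by
  obtain ⟨j, hj, hj'⟩ := exists_nat_pow_near ((one_le_div hx).mpr hxT) one_lt_two
  refine ⟨j, (le_div_comm₀ (by positivity) hx).mp hj, ?_⟩
  rw [pow_succ, div_lt_iff₀ hx] at hj'
  rw [div_le_iff₀ (by positivity)]
  linarith

lemma sum_range_sq_div_two_pow_le (T : ℝ) (M : ℕ) :
    ∑ j ∈ range M, (T / 2 ^ j) ^ 2 ≤ 2 * T ^ 2 := by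
  have hgeom : ∑ j ∈ range M, ((1 : ℝ) / 4) ^ j ≤ 2 := by
    rw [geom_sum_eq (by norm_num), div_le_iff_of_neg (by norm_num)]
    linarith [pow_nonneg (show (0 : ℝ) ≤ 1 / 4 by norm_num) M]
  calc ∑ j ∈ range M, (T / 2 ^ j) ^ 2 = T ^ 2 * ∑ j ∈ range M, ((1 : ℝ) / 4) ^ j := by
        rw [mul_sum]
        refine sum_congr rfl fun j _ => ?_
        rw [div_pow, ← pow_mul, mul_comm j, pow_mul, one_div_pow]
        norm_num [div_eq_mul_inv]
    _ ≤ T ^ 2 * 2 := by gcongr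
    _ = 2 * T ^ 2 := mul_comm _ _

/-- Each `k` is charged to the dyadic scale `t = T / 2 ^ j ∈ [f k, 2 f k]`; swapping the sums,
scale `t` is charged at most `#{f ≤ t} ≤ c t ^ d` times `(2 / t) ^ (d - 2)`, and the scales
contribute a geometric series in `t ^ 2`. -/
lemma sum_one_div_pow_le_of_card_le (s : Finset ι) (f : ι → ℝ) {d : ℕ} (hd : 2 ≤ d)
    {r T c : ℝ} (hr : 0 < r) (hT : 0 < T) (hc : 0 ≤ c)
    (hcount : ∀ t, r ≤ t → ((s.filter fun k => f k ≤ t).card : ℝ) ≤ c * t ^ d) :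
    ∑ k ∈ s.filter (fun k => r ≤ f k ∧ f k ≤ T), 1 / f k ^ (d - 2) ≤ 2 ^ d * c * T ^ 2 := by
  set near := s.filter fun k => r ≤ f k ∧ f k ≤ T
  set t : ℕ → ℝ := fun j => T / 2 ^ j
  obtain ⟨M, hM⟩ := exists_pow_lt_of_lt_one (div_pos hr hT) (by norm_num : (1 : ℝ) / 2 < 1)
  set w : ℕ → ℝ := fun j => 2 ^ (d - 2) / t j ^ (d - 2)
  set J := (range M).filter fun j => r ≤ t j
  have hcharge : ∀ k ∈ near,
      1 / f k ^ (d - 2) ≤ ∑ j ∈ J, if f k ≤ t j then w j else 0 := by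
    intro k hk
    obtain ⟨-, hrk, hkT⟩ := mem_filter.mp hk
    have hk0 : 0 < f k := hr.trans_le hrk
    obtain ⟨j, hjlo, hjhi⟩ := exists_dyadic_scale hk0 hkT
    have hjM : j < M := by
      by_contra! hMj
      have : t j ≤ t M := div_le_div_of_nonneg_left hT.le (by positivity)
        (pow_le_pow_right₀ one_le_two hMj)
      have : t M < r := by
        simpa [t, div_eq_mul_inv, mul_comm] using (lt_div_iff₀ hT).mp hM
      linarith
    have hj : j ∈ J := mem_filter.mpr ⟨mem_range.mpr hjM, hrk.trans hjlo⟩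
    calc 1 / f k ^ (d - 2) = 2 ^ (d - 2) / (2 * f k) ^ (d - 2) := by
          rw [mul_pow, div_mul_cancel_left₀ (by positivity), one_div]
      _ ≤ 2 ^ (d - 2) / t j ^ (d - 2) := by
          gcongr
      _ = if f k ≤ t j then w j else 0 := (if_pos hjlo).symm
      _ ≤ ∑ j ∈ J, if f k ≤ t j then w j else 0 :=
          single_le_sum (f := fun j => if f k ≤ t j then w j else 0)
            (fun i _ => by positivity) hj
  have hscale : ∀ j ∈ J, w j * ((near.filter fun k => f k ≤ t j).card : ℝ) ≤
      2 ^ (d - 2) * c * t j ^ 2 := by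
    intro j hj
    have htj : 0 < t j := by positivity
    have hsub : near.filter (fun k => f k ≤ t j) ⊆ s.filter fun k => f k ≤ t j :=
      filter_subset_filter _ (filter_subset _ s)
    calc w j * ((near.filter fun k => f k ≤ t j).card : ℝ)
        ≤ w j * (c * t j ^ d) := by
          gcongr
          exact (Nat.cast_le.mpr (card_le_card hsub)).trans
            (hcount _ (mem_filter.mp hj).2)
      _ = 2 ^ (d - 2) * c * t j ^ 2 := by
          simp only [w]
          rw [← pow_sub_mul_pow (t j) hd]
          field_simp
  calc ∑ k ∈ near, 1 / f k ^ (d - 2)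
      ≤ ∑ k ∈ near, ∑ j ∈ J, if f k ≤ t j then w j else 0 := sum_le_sum hcharge
    _ = ∑ j ∈ J, w j * ((near.filter fun k => f k ≤ t j).card : ℝ) := by
        rw [sum_comm]
        refine sum_congr rfl fun j _ => ?_
        rw [← sum_filter, sum_const, nsmul_eq_mul, mul_comm]
    _ ≤ ∑ j ∈ J, 2 ^ (d - 2) * c * t j ^ 2 := sum_le_sum hscale
    _ ≤ ∑ j ∈ range M, 2 ^ (d - 2) * c * t j ^ 2 :=
        sum_le_sum_of_subset_of_nonneg (filter_subset _ _) fun _ _ _ => by positivity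
    _ ≤ 2 ^ (d - 2) * c * (2 * T ^ 2) := by
        rw [← mul_sum]
        exact mul_le_mul_of_nonneg_left (sum_range_sq_div_two_pow_le T M) (by positivity)
    _ ≤ 2 ^ d * c * T ^ 2 := by
        have : (2 : ℝ) ^ (d - 2) * 2 ≤ 2 ^ d := by
          rw [← pow_succ]; exact pow_le_pow_right₀ one_le_two (by omega)
        nlinarith [mul_nonneg hc (sq_nonneg T)]

lemma sum_filter_one_div_pow_le (s : Finset ι) (f : ι → ℝ) {d : ℕ} (hd : 2 ≤ d)
    {r T c : ℝ} (hr : 0 < r) (hT : 0 < T) (hc : 0 ≤ c)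
    (hcount : ∀ t, r ≤ t → ((s.filter fun k => f k ≤ t).card : ℝ) ≤ c * t ^ d) :
    ∑ k ∈ s.filter (fun k => r ≤ f k), 1 / f k ^ (d - 2)
      ≤ 2 ^ d * c * T ^ 2 + s.card / T ^ (d - 2) := by
  rw [← sum_filter_add_sum_filter_not _ fun k => f k ≤ T, filter_filter, filter_filter]
  refine add_le_add (sum_one_div_pow_le_of_card_le s f hd hr hT hc hcount) ?_
  refine (sum_one_div_pow_le_card_div _ _ _ hT fun k hk => ?_).trans ?_
  · exact (not_le.mp (mem_filter.mp hk).2.2).le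
  · gcongr
    exact filter_subset _ _

end DyadicSum

lemma mul_sq_eq_rpow {d : ℕ} (hd : d ≠ 0) {ρ T : ℝ} (hρ : 0 < ρ) (hT : 0 ≤ T) :
    ρ * T ^ 2 = ρ ^ ((1 : ℝ) - 2 / d) * (ρ * T ^ d) ^ ((2 : ℝ) / d) := by
  rw [Real.mul_rpow hρ.le (by positivity), ← Real.rpow_natCast T d, ← Real.rpow_mul hT,
    mul_div_cancel₀ _ (Nat.cast_ne_zero.mpr hd), ← mul_assoc, ← Real.rpow_add hρ]
  norm_num

open Classical in
/-- Rearrangement bound: under the same density hypothesis,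
`Σ_{k∈K, ‖S(k)-z‖ ≥ 2r} ‖S(k)-z‖^{-(d-2)} ≤ C₃ ρ^{1-2/d} |K|^{2/d}`. -/
theorem local_density_global_sum {d : ℕ} (hd : 3 ≤ d) :
    ∃ C₃ : ℝ, 0 < C₃ ∧ ∀ (ρ : ℝ), 0 < ρ → ρ < 1 → ∀ r : ℕ, 1 ≤ r →
      ∀ (S : ℕ → V d) (K : Finset ℕ),
      (∀ m : V d, ((K.filter fun k => S k ∈ cube (r • m) (r : ℝ)).card : ℝ)
          ≤ ρ * (r : ℝ) ^ d) →
      ∀ z : V d,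
      ∑ k ∈ K.filter fun k => 2 * (r : ℝ) ≤ nrm (S k - z),
          1 / nrm (S k - z) ^ (d - 2)
        ≤ C₃ * ρ ^ ((1 : ℝ) - 2 / d) * (K.card : ℝ) ^ ((2 : ℝ) / d) := by
  refine ⟨8 ^ d + 1, by positivity, fun ρ hρ _ r hr S K hdens z => ?_⟩
  rcases K.eq_empty_or_nonempty with rfl | hK
  · simp only [filter_empty, sum_empty]
    positivity
  set T := ((K.card : ℝ) / ρ) ^ (d⁻¹ : ℝ)
  have hT : 0 < T := by have := hK.card_pos; positivity
  have hTd : ρ * T ^ d = K.card := by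
    rw [Real.rpow_inv_natCast_pow (by positivity) (by omega), mul_div_cancel₀ _ hρ.ne']
  calc _ ≤ 2 ^ d * (4 ^ d * ρ) * T ^ 2 + K.card / T ^ (d - 2) :=
        sum_filter_one_div_pow_le K _ (by omega) (by positivity) hT (by positivity)
          fun t ht => card_filter_nrm_le hρ.le hr S K hdens z (by linarith)
    _ = (8 ^ d + 1) * (ρ * T ^ 2) := by
        rw [← hTd, ← pow_sub_mul_pow T (show 2 ≤ d by omega),
          show (8 : ℝ) = 2 * 4 by norm_num, mul_pow]
        field_simp
    _ = _ := by rw [mul_sq_eq_rpow (show d ≠ 0 by omega) hρ hT.le, hTd, mul_assoc]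

end SRW
end
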